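/- Let (T,d) be a rooted real tree (0-hyperbolic geodesic metric space) with root ρ, and for points σ, σ' let σ ∧ σ' denote their most recent common ancestor, i.e., the unique point with [ρ,σ] ∩ [ρ,σ'] = [ρ, σ∧σ']. Fix α < 1 and define d^{(α)}(σ,σ') = d(ρ,σ)^{1−α} + d(ρ,σ')^{1−α} − 2 d(ρ, σ∧σ')^{1−α}. Then d^{(α)} is a metric on T. -/

import Mathlib

/-! On a tree the Gromov product `(x | y)_ρ` is the height of the most recent common ancestor of
`x` and `y`, and `0`-hyperbolicity says that `(x | y)_ρ ≥ min ((x | z)_ρ, (z | y)_ρ)` with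
`(x | z)_ρ, (z | y)_ρ ≤ d(ρ, z)`. For any `f` monotone on `[0, ∞)` this gives
`f (x | z)_ρ + f (z | y)_ρ ≤ f (x | y)_ρ + f (d(ρ, z))`, which is exactly the triangle inequality for
`f (d(ρ, x)) + f (d(ρ, y)) - 2 f (x | y)_ρ`; strict monotonicity of `f` makes it separate points.
Here `f t = t ^ (1 - α)`. -/

noncomputable def distAlpha {T : Type*} [MetricSpace T] (ρ : T) (mrca : T → T → T)
    (α : ℝ) (σ σ' : T) : ℝ :=
  dist ρ σ ^ (1 - α) + dist ρ σ' ^ (1 - α) - 2 * dist ρ (mrca σ σ') ^ (1 - α)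

open Set

section GromovProduct

variable {X : Type*} [PseudoMetricSpace X]

noncomputable def gromovProduct (w x y : X) : ℝ := (dist w x + dist w y - dist x y) / 2

def FourPointCondition (X : Type*) [PseudoMetricSpace X] : Prop :=
  ∀ x y z w : X, dist x y + dist z w ≤ max (dist x z + dist y w) (dist x w + dist y z)

variable (w x y z : X)

theorem gromovProduct_comm : gromovProduct w x y = gromovProduct w y x := by
  simp only [gromovProduct, dist_comm x y, add_comm (dist w x)]

@[simp]
theorem gromovProduct_self : gromovProduct w x x = dist w x := by
  simp [gromovProduct]

theorem gromovProduct_nonneg : 0 ≤ gromovProduct w x y := by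
  have := dist_triangle_left x y w
  unfold gromovProduct
  linarith

theorem gromovProduct_le_dist_left : gromovProduct w x y ≤ dist w x := by
  have := dist_triangle w x y
  unfold gromovProduct
  linarith

theorem gromovProduct_le_dist_right : gromovProduct w x y ≤ dist w y := by
  rw [gromovProduct_comm]
  exact gromovProduct_le_dist_left w y x

theorem min_gromovProduct_le_of_fourPointCondition (h : FourPointCondition X) :
    min (gromovProduct w x z) (gromovProduct w z y) ≤ gromovProduct w x y := by
  have hxy := le_max_iff.mp (h x y z w)
  simp only [gromovProduct, dist_comm _ w, dist_comm y z] at hxy ⊢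
  rcases hxy with hxy | hxy
  · exact min_le_of_left_le (by linarith)
  · exact min_le_of_right_le (by linarith)

end GromovProduct

section WarpedDist

variable {X : Type*} [PseudoMetricSpace X] (f : ℝ → ℝ) (w : X)

/-- On a tree rooted at `w`, the distance obtained by reparametrising every height
`t = dist w ·` as `f t`. -/
noncomputable def warpedDist (x y : X) : ℝ :=
  f (dist w x) + f (dist w y) - 2 * f (gromovProduct w x y)

@[simp]
theorem warpedDist_self (x : X) : warpedDist f w x x = 0 := by
  simp only [warpedDist, gromovProduct_self]
  ring

theorem warpedDist_comm (x y : X) : warpedDist f w x y = warpedDist f w y x := by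
  simp only [warpedDist, gromovProduct_comm w x y]
  ring

variable {f}

theorem MonotoneOn.map_gromovProduct_le (hf : MonotoneOn f (Ici 0)) (x y : X) :
    f (gromovProduct w x y) ≤ f (dist w x) ∧ f (gromovProduct w x y) ≤ f (dist w y) :=
  ⟨hf (gromovProduct_nonneg w x y) dist_nonneg (gromovProduct_le_dist_left w x y),
    hf (gromovProduct_nonneg w x y) dist_nonneg (gromovProduct_le_dist_right w x y)⟩

theorem warpedDist_nonneg (hf : MonotoneOn f (Ici 0)) (x y : X) : 0 ≤ warpedDist f w x y := by
  have := hf.map_gromovProduct_le w x y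
  unfold warpedDist
  linarith

theorem warpedDist_triangle (hf : MonotoneOn f (Ici 0)) (h : FourPointCondition X) (x y z : X) :
    warpedDist f w x y ≤ warpedDist f w x z + warpedDist f w z y := by
  have hmin := hf (le_min (gromovProduct_nonneg w x z) (gromovProduct_nonneg w z y))
    (gromovProduct_nonneg w x y) (min_gromovProduct_le_of_fourPointCondition w x y z h)
  have hmax := hf (le_max_of_le_left (gromovProduct_nonneg w x z)) dist_nonneg
    (max_le (gromovProduct_le_dist_right w x z) (gromovProduct_le_dist_left w z y))
  suffices f (gromovProduct w x z) + f (gromovProduct w z y) ≤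
      f (gromovProduct w x y) + f (dist w z) by
    unfold warpedDist
    linarith
  rcases le_total (gromovProduct w x z) (gromovProduct w z y) with hc | hc
  · rw [min_eq_left hc] at hmin
    rw [max_eq_right hc] at hmax
    linarith
  · rw [min_eq_right hc] at hmin
    rw [max_eq_left hc] at hmax
    linarith

theorem dist_eq_zero_of_warpedDist_eq_zero (hf : StrictMonoOn f (Ici 0)) {x y : X}
    (h : warpedDist f w x y = 0) : dist x y = 0 := by
  obtain ⟨hx, hy⟩ := hf.monotoneOn.map_gromovProduct_le w x y
  unfold warpedDist at h
  have hGx : gromovProduct w x y = dist w x :=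
    hf.injOn (gromovProduct_nonneg w x y) dist_nonneg (by linarith)
  have hGy : gromovProduct w x y = dist w y :=
    hf.injOn (gromovProduct_nonneg w x y) dist_nonneg (by linarith)
  unfold gromovProduct at hGx hGy
  linarith

end WarpedDist

theorem warpedDist_eq_zero_iff {X : Type*} [MetricSpace X] {f : ℝ → ℝ}
    (hf : StrictMonoOn f (Ici 0)) (w : X) {x y : X} : warpedDist f w x y = 0 ↔ x = y :=
  ⟨fun h ↦ dist_eq_zero.mp (dist_eq_zero_of_warpedDist_eq_zero w hf h),
    fun h ↦ h ▸ warpedDist_self f w x⟩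

theorem distAlpha_eq_warpedDist {T : Type*} [MetricSpace T] (ρ : T) (mrca : T → T → T)
    (hgromov : ∀ x y, dist ρ (mrca x y) = (dist ρ x + dist ρ y - dist x y) / 2) (α : ℝ) :
    distAlpha ρ mrca α = warpedDist (· ^ (1 - α)) ρ := by
  ext σ σ'
  simp only [distAlpha, warpedDist, hgromov, gromovProduct]

theorem distAlpha_is_metric_general {T : Type*} [MetricSpace T] (ρ : T) (mrca : T → T → T)
    (hfour : ∀ x y z w : T,
      dist x y + dist z w ≤ max (dist x z + dist y w) (dist x w + dist y z))
    (hgromov : ∀ x y, dist ρ (mrca x y) = (dist ρ x + dist ρ y - dist x y) / 2)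
    (α : ℝ) (hα : α < 1) :
    (∀ σ σ' : T, 0 ≤ distAlpha ρ mrca α σ σ') ∧
    (∀ σ σ' : T, distAlpha ρ mrca α σ σ' = 0 ↔ σ = σ') ∧
    (∀ σ σ' : T, distAlpha ρ mrca α σ σ' = distAlpha ρ mrca α σ' σ) ∧
    (∀ σ τ σ' : T,
      distAlpha ρ mrca α σ σ' ≤ distAlpha ρ mrca α σ τ + distAlpha ρ mrca α τ σ') := by
  have hf : StrictMonoOn (· ^ (1 - α)) (Ici (0 : ℝ)) :=
    Real.strictMonoOn_rpow_Ici_of_exponent_pos (by linarith)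
  rw [distAlpha_eq_warpedDist ρ mrca hgromov α]
  exact ⟨warpedDist_nonneg ρ hf.monotoneOn, fun _ _ ↦ warpedDist_eq_zero_iff hf ρ,
    warpedDist_comm _ ρ, fun σ τ σ' ↦ warpedDist_triangle ρ hf.monotoneOn hfour σ σ' τ⟩

theorem distAlpha_is_metric {T : Type*} [MetricSpace T] (ρ : T) (mrca : T → T → T)
    (hfour : ∀ x y z w : T,
      dist x y + dist z w ≤ max (dist x z + dist y w) (dist x w + dist y z))
    (hgromov : ∀ x y, dist ρ (mrca x y) = (dist ρ x + dist ρ y - dist x y) / 2)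
    (hgeo₁ : ∀ x y, dist ρ (mrca x y) + dist (mrca x y) x = dist ρ x)
    (hsymm : ∀ x y, mrca x y = mrca y x)
    (α : ℝ) (hα : α < 1) :
    (∀ σ σ' : T, 0 ≤ distAlpha ρ mrca α σ σ') ∧
    (∀ σ σ' : T, distAlpha ρ mrca α σ σ' = 0 ↔ σ = σ') ∧
    (∀ σ σ' : T, distAlpha ρ mrca α σ σ' = distAlpha ρ mrca α σ' σ) ∧
    (∀ σ τ σ' : T,
      distAlpha ρ mrca α σ σ' ≤ distAlpha ρ mrca α σ τ + distAlpha ρ mrca α τ σ') :=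
  distAlpha_is_metric_general ρ mrca hfour hgromov α hα
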